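/- Let A ⊆ S^{n-1} be finite with 0 in the interior of conv(A), and suppose the maximum of ‖x‖ over the polar (conv A)° equals λ. Then λ ≥ 1, and the covering radius r = arccos(1/λ) of A satisfies: every point of S^{n-1} is within angular distance r of some point of A, and there exists a point of S^{n-1} whose angular distance to every point of A equals at least r. -/
import Mathlib


open RealInnerProductSpace

/-- The polar of a set. -/
def polarSet {n : ℕ} (K : Set (EuclideanSpace ℝ (Fin n))) : Set (EuclideanSpace ℝ (Fin n)) :=
  {x | ∀ y ∈ K, ⟪x, y⟫ ≤ 1}

lemma my_arccos_le_arccos {x y : ℝ} (h : x ≤ y) : Real.arccos y ≤ Real.arccos x := by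
  rw [Real.arccos_eq_pi_div_two_sub_arcsin, Real.arccos_eq_pi_div_two_sub_arcsin]
  linarith [Real.monotone_arcsin h]

lemma mem_polar_of_forall {n : ℕ} {A : Set (EuclideanSpace ℝ (Fin n))}
    {x : EuclideanSpace ℝ (Fin n)} (h : ∀ a ∈ A, ⟪x, a⟫ ≤ 1) :
    x ∈ polarSet (convexHull ℝ A) := by
  intro y hy
  have hconv : Convex ℝ {y : EuclideanSpace ℝ (Fin n) | ⟪x, y⟫ ≤ 1} :=
    convex_halfSpace_le
      ⟨fun a b => inner_add_right x a b, fun c a => real_inner_smul_right x a c⟩ 1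
  exact convexHull_min h hconv hy

theorem covering_radius_attained {n : ℕ}
    (A : Set (EuclideanSpace ℝ (Fin n))) (hA : A.Finite)
    (hAs : A ⊆ Metric.sphere (0 : EuclideanSpace ℝ (Fin n)) 1)
    (h0 : (0 : EuclideanSpace ℝ (Fin n)) ∈ interior (convexHull ℝ A))
    (lam : ℝ) (hlam : IsGreatest (norm '' polarSet (convexHull ℝ A)) lam) :
    1 ≤ lam ∧
    (∀ x ∈ Metric.sphere (0 : EuclideanSpace ℝ (Fin n)) 1,
      ∃ a ∈ A, Real.arccos ⟪x, a⟫ ≤ Real.arccos lam⁻¹) ∧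
    (∃ x ∈ Metric.sphere (0 : EuclideanSpace ℝ (Fin n)) 1,
      ∀ a ∈ A, Real.arccos lam⁻¹ ≤ Real.arccos ⟪x, a⟫) := by
  have hAne : A.Nonempty := by
    rcases A.eq_empty_or_nonempty with h | h
    · rw [h] at h0; simp [convexHull_empty] at h0
    · exact h
  obtain ⟨a₀, ha₀⟩ := hAne
  have hnorm : ∀ a ∈ A, ‖a‖ = 1 := fun a ha => mem_sphere_zero_iff_norm.mp (hAs ha)
  have hball : convexHull ℝ A ⊆ Metric.closedBall 0 1 :=
    convexHull_min (fun a ha => Metric.sphere_subset_closedBall (hAs ha))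
      (convex_closedBall _ _)
  have ha₀polar : a₀ ∈ polarSet (convexHull ℝ A) := by
    intro y hy
    have hy1 : ‖y‖ ≤ 1 := mem_closedBall_zero_iff.mp (hball hy)
    calc ⟪a₀, y⟫ ≤ ‖a₀‖ * ‖y‖ := real_inner_le_norm _ _
      _ ≤ 1 := by rw [hnorm a₀ ha₀, one_mul]; exact hy1
  have h1lam : 1 ≤ lam := by
    have := hlam.2 ⟨a₀, ha₀polar, rfl⟩
    rwa [hnorm a₀ ha₀] at this
  have hlampos : 0 < lam := lt_of_lt_of_le one_pos h1lam
  have hinvpos : 0 < lam⁻¹ := inv_pos.mpr hlampos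
  refine ⟨h1lam, ?_, ?_⟩
  · intro x hx
    by_contra hcon
    push_neg at hcon
    have hxnorm : ‖x‖ = 1 := mem_sphere_zero_iff_norm.mp hx
    have hlt : ∀ a ∈ A, ⟪x, a⟫ < lam⁻¹ := by
      intro a ha
      by_contra hge
      push_neg at hge
      exact absurd (my_arccos_le_arccos hge) (not_le.mpr (hcon a ha))
    have hsne : hA.toFinset.Nonempty := ⟨a₀, hA.mem_toFinset.mpr ha₀⟩
    set m := hA.toFinset.sup' hsne (fun a => ⟪x, a⟫) with hm
    obtain ⟨am, ham, hameq⟩ := Finset.exists_mem_eq_sup' hsne (fun a => ⟪x, a⟫)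
    have hmlt : m < lam⁻¹ := by
      rw [hm, hameq]; exact hlt am (hA.mem_toFinset.mp ham)
    set c : ℝ := max m (lam⁻¹ / 2) with hc
    have hcpos : 0 < c := lt_of_lt_of_le (by linarith) (le_max_right _ _)
    have hclt : c < lam⁻¹ := max_lt hmlt (by linarith)
    have hcle : ∀ a ∈ A, ⟪x, a⟫ ≤ c := by
      intro a ha
      exact le_trans (Finset.le_sup' (fun a => ⟪x, a⟫) (hA.mem_toFinset.mpr ha))
        (le_max_left _ _)
    have hxpolar : c⁻¹ • x ∈ polarSet (convexHull ℝ A) := by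
      apply mem_polar_of_forall
      intro a ha
      rw [real_inner_smul_left]
      calc c⁻¹ * ⟪x, a⟫ ≤ c⁻¹ * c :=
            mul_le_mul_of_nonneg_left (hcle a ha) (le_of_lt (inv_pos.mpr hcpos))
        _ = 1 := inv_mul_cancel₀ (ne_of_gt hcpos)
    have hle : ‖c⁻¹ • x‖ ≤ lam := hlam.2 ⟨_, hxpolar, rfl⟩
    rw [norm_smul, hxnorm, mul_one, Real.norm_eq_abs,
      abs_of_pos (inv_pos.mpr hcpos)] at hle
    have : lam < c⁻¹ := by
      rw [← inv_inv lam]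
      exact inv_strictAnti₀ hcpos hclt
    linarith
  · obtain ⟨x₀, hx₀polar, hx₀norm⟩ := hlam.1
    have hxn : ‖lam⁻¹ • x₀‖ = 1 := by
      rw [norm_smul, hx₀norm, Real.norm_eq_abs, abs_of_pos hinvpos,
        inv_mul_cancel₀ (ne_of_gt hlampos)]
    refine ⟨lam⁻¹ • x₀, mem_sphere_zero_iff_norm.mpr hxn, ?_⟩
    intro a ha
    have h1 : ⟪x₀, a⟫ ≤ 1 := hx₀polar a (subset_convexHull ℝ A ha)
    have h3 : ⟪lam⁻¹ • x₀, a⟫ ≤ lam⁻¹ := by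
      rw [real_inner_smul_left]
      nlinarith
    have h4 : -1 ≤ ⟪lam⁻¹ • x₀, a⟫ := by
      have habs := abs_real_inner_le_norm (lam⁻¹ • x₀) a
      rw [hxn, hnorm a ha, one_mul] at habs
      linarith [neg_abs_le ⟪lam⁻¹ • x₀, a⟫]
    exact my_arccos_le_arccos h3
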